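/- arXiv:2101.10271 — 4 statements merged into one kernel-verified Lean document; each statement's English description precedes it below -/
import Mathlib

section
/- Let g ≥ 2, α = 2π/(8g−4), and for each integer k define the Möbius transformation T_k(z) = (−1)^{k+1} (e^{i(1−k)α} z + i·√(cos α)) / ((−i·√(cos α)) z + e^{i(k−1)α}) on the complex plane. Then for all z on the unit circle, T_k(e^{iα} z) = e^{i(4g−3)α} · T_{k−1}(z). -/
open Complex Real

noncomputable def alphaG (g : ℕ) : ℝ := 2 * Real.pi / (8 * (g : ℝ) - 4)

noncomputable def Tgen (g : ℕ) (k : ℤ) (z : ℂ) : ℂ :=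
  (-1 : ℂ) ^ (k + 1) *
    ((Complex.exp (Complex.I * (1 - (k : ℂ)) * (alphaG g : ℂ)) * z
        + Complex.I * (Real.sqrt (Real.cos (alphaG g)) : ℂ)) /
     (-Complex.I * (Real.sqrt (Real.cos (alphaG g)) : ℂ) * z
        + Complex.exp (Complex.I * ((k : ℂ) - 1) * (alphaG g : ℂ))))

/-!
Write `E = exp (iα)`. Replacing `z` by `E z` in `T_k` leaves the numerator of `T_{k-1}(z)`
unchanged and multiplies its denominator by `E`, while the sign `(-1)^(k+1)` flips; so
`T_k(E z) = -E⁻¹ T_{k-1}(z)`. Since `(4g - 2) α = π`, the factor `-E⁻¹` is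
`exp (i (4g - 3) α)`.
-/

theorem four_mul_sub_three_mul_alphaG (g : ℕ) :
    (4 * (g : ℝ) - 3) * alphaG g = π - alphaG g := by
  have hden : (8 * (g : ℝ) - 4) ≠ 0 :=
    sub_ne_zero.mpr (by exact_mod_cast (by omega : 8 * g ≠ 4))
  have hπ : (4 * (g : ℝ) - 2) * alphaG g = π := by
    rw [alphaG, mul_div_assoc', div_eq_iff hden]
    ring
  linarith

theorem exp_I_mul_four_mul_sub_three_mul_alphaG (g : ℕ) :
    exp (I * ((4 * (g : ℂ) - 3) * (alphaG g : ℂ))) = -(exp (I * (alphaG g : ℂ)))⁻¹ := by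
  have h : I * ((4 * (g : ℂ) - 3) * (alphaG g : ℂ)) = π * I + -(I * (alphaG g : ℂ)) := by
    have := congrArg (fun x : ℝ => (x : ℂ)) (four_mul_sub_three_mul_alphaG g)
    push_cast at this
    linear_combination I * this
  rw [h, Complex.exp_add, exp_pi_mul_I, Complex.exp_neg]
  ring

theorem Tgen_exp_mul (g : ℕ) (k : ℤ) (z : ℂ) :
    Tgen g k (exp (I * (alphaG g : ℂ)) * z)
      = -(exp (I * (alphaG g : ℂ)))⁻¹ * Tgen g (k - 1) z := by
  set E := exp (I * (alphaG g : ℂ))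
  set s : ℂ := (Real.sqrt (Real.cos (alphaG g)) : ℂ)
  have hnum : exp (I * (1 - (k : ℂ)) * (alphaG g : ℂ)) * (E * z)
      = exp (I * (1 - ((k - 1 : ℤ) : ℂ)) * (alphaG g : ℂ)) * z := by
    rw [← mul_assoc, ← Complex.exp_add]
    push_cast
    ring_nf
  have hden : -I * s * (E * z) + exp (I * (k - 1) * (alphaG g : ℂ))
      = E * (-I * s * z + exp (I * (((k - 1 : ℤ) : ℂ) - 1) * (alphaG g : ℂ))) := by
    rw [mul_add, ← Complex.exp_add]
    push_cast
    ring_nf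
  have hsign : (-1 : ℂ) ^ (k + 1) = -(-1 : ℂ) ^ (k - 1 + 1) := by
    rw [sub_add_cancel, zpow_add_one₀ (by norm_num)]
    ring
  unfold Tgen
  rw [hnum, hden, hsign, mul_comm E, ← div_div]
  ring

theorem Tgen_shift_general (g : ℕ) (k : ℤ) (z : ℂ) :
    Tgen g k (Complex.exp (Complex.I * (alphaG g : ℂ)) * z)
      = Complex.exp (Complex.I * ((4 * (g : ℂ) - 3) * (alphaG g : ℂ))) * Tgen g (k - 1) z := by
  rw [Tgen_exp_mul, exp_I_mul_four_mul_sub_three_mul_alphaG]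

theorem Tgen_shift (g : ℕ) (hg : 2 ≤ g) (k : ℤ) (z : ℂ) (hz : ‖z‖ = 1) :
    Tgen g k (Complex.exp (Complex.I * (alphaG g : ℂ)) * z)
      = Complex.exp (Complex.I * ((4 * (g : ℂ) - 3) * (alphaG g : ℂ))) * Tgen g (k - 1) z :=
  Tgen_shift_general g k z
end

section
/- Let g ≥ 2, α = 2π/(8g−4), C_k = e^{i(k−2g)α}, and T_k(z) = (−1)^{k+1} (e^{i(1−k)α} z + i√(cos α)) / ((−i√(cos α)) z + e^{i(k−1)α}). Then for all z on the unit circle, T_k(C_k · z) · T_k(C_k / z) = 1 / C_k². -/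
open Complex Real

noncomputable def Cmid (g : ℕ) (k : ℤ) : ℂ :=
  Complex.exp (Complex.I * (((k : ℂ) - 2 * (g : ℂ)) * (alphaG g : ℂ)))

/-! With `a = e^{i(k-1)α}` and `c = √(cos α)` one has `C_k = -i a`, because `(1 - 2g) α = -π/2`,
and `T_k(w) = ± (a⁻¹ w + i c) / (-i c w + a)`. Then `T_k(-i a z) = ± i (c - z) / (a (1 - c z))`
and `T_k(-i a / z) = ± i (c z - 1) / (a (z - c))`, whose product is `-1/a² = 1/C_k²`.
The factors `1 - c z` and `z - c` do not vanish on the unit circle because `c ≠ 1`: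
`cos α = 1` would force `1 ∈ (8g - 4)ℤ`. -/

noncomputable def moebius (s a c w : ℂ) : ℂ :=
  s * ((a⁻¹ * w + I * c) / (-I * c * w + a))

section Moebius

variable {s a c z : ℂ}

lemma moebius_neg_I_mul_mul (ha : a ≠ 0) :
    moebius s a c (-I * a * z) = s * I * (c - z) / (a * (1 - c * z)) := by
  unfold moebius
  rw [show -I * c * (-I * a * z) + a = a * (1 - c * z) by linear_combination c * a * z * I_sq]
  field_simp
  ring

lemma moebius_neg_I_mul_div (ha : a ≠ 0) (hz : z ≠ 0) :
    moebius s a c (-I * a / z) = s * I * (c * z - 1) / (a * (z - c)) := by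
  unfold moebius
  rw [show -I * c * (-I * a / z) + a = a * (z - c) / z by field_simp; linear_combination c * I_sq]
  field_simp
  ring

lemma one_sub_mul_ne_zero_of_norm_eq_one (hz : ‖z‖ = 1) (hc : ‖c‖ ≠ 1) : 1 - c * z ≠ 0 := by
  intro h
  apply hc
  simpa [hz] using congrArg norm (sub_eq_zero.mp h).symm

lemma sub_ne_zero_of_norm_eq_one (hz : ‖z‖ = 1) (hc : ‖c‖ ≠ 1) : z - c ≠ 0 := by
  intro h
  exact hc (sub_eq_zero.mp h ▸ hz)

theorem moebius_mul_moebius_inv (hs : s ^ 2 = 1) (ha : a ≠ 0) (hz : ‖z‖ = 1) (hc : ‖c‖ ≠ 1) :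
    moebius s a c (-I * a * z) * moebius s a c (-I * a / z) = 1 / (-I * a) ^ 2 := by
  have hz0 : z ≠ 0 := norm_ne_zero_iff.mp (by simp [hz])
  have h₁ := one_sub_mul_ne_zero_of_norm_eq_one hz hc
  have h₂ := sub_ne_zero_of_norm_eq_one hz hc
  rw [moebius_neg_I_mul_mul ha, moebius_neg_I_mul_div ha hz0]
  field_simp
  simp only [I_pow_four, hs]
  ring

end Moebius

lemma eight_mul_sub_four_ne_zero (g : ℕ) : 8 * (g : ℝ) - 4 ≠ 0 :=
  sub_ne_zero.mpr (by exact_mod_cast (by omega : 8 * g ≠ 4))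

lemma cos_alphaG_ne_one (g : ℕ) : Real.cos (alphaG g) ≠ 1 := by
  rw [Ne, Real.cos_eq_one_iff]
  rintro ⟨n, hn⟩
  rw [alphaG, eq_div_iff (eight_mul_sub_four_ne_zero g)] at hn
  have hR : (n * (8 * g - 4) : ℝ) = 1 :=
    mul_right_cancel₀ Real.pi_ne_zero (by linear_combination hn / 2)
  have hZ : n * (8 * g - 4 : ℤ) = 1 := by exact_mod_cast hR
  have h4 : (4 : ℤ) ∣ 1 := ⟨n * (2 * g - 1), by linear_combination -hZ⟩
  norm_num at h4

lemma Tgen_eq_moebius (g : ℕ) (k : ℤ) :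
    Tgen g k = moebius ((-1) ^ (k + 1)) (exp (I * (k - 1) * alphaG g)) (√(Real.cos (alphaG g))) := by
  ext w
  rw [Tgen, moebius, ← Complex.exp_neg, show -(I * (k - 1) * alphaG g) = I * (1 - k) * alphaG g by ring]

lemma Cmid_eq_neg_I_mul (g : ℕ) (k : ℤ) : Cmid g k = -I * exp (I * (k - 1) * alphaG g) := by
  have hquarter : I * ((1 - 2 * g) * alphaG g) = -(π / 2 * I) := by
    have hR : (1 - 2 * g) * alphaG g = -(π / 2) := by
      rw [alphaG, mul_div_assoc', div_eq_iff (eight_mul_sub_four_ne_zero g)]; ring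
    have := congrArg (fun x : ℝ => (x : ℂ)) hR
    push_cast at this
    linear_combination I * this
  rw [Cmid, show I * ((k - 2 * g) * alphaG g) = I * (k - 1) * alphaG g + I * ((1 - 2 * g) * alphaG g)
    by ring, Complex.exp_add, hquarter, Complex.exp_neg, exp_pi_div_two_mul_I, inv_I]
  ring

theorem Tgen_central_symmetry_general (g : ℕ) (k : ℤ) (z : ℂ) (hz : ‖z‖ = 1) :
    Tgen g k (Cmid g k * z) * Tgen g k (Cmid g k / z) = 1 / (Cmid g k) ^ 2 := by
  rw [Tgen_eq_moebius, Cmid_eq_neg_I_mul]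
  refine moebius_mul_moebius_inv ?_ (exp_ne_zero _) hz ?_
  · rw [← zpow_natCast, ← zpow_mul, mul_comm, zpow_mul]
    norm_num
  · rw [Complex.norm_of_nonneg (Real.sqrt_nonneg _), Ne, Real.sqrt_eq_one]
    exact cos_alphaG_ne_one g

theorem Tgen_central_symmetry (g : ℕ) (hg : 2 ≤ g) (k : ℤ) (z : ℂ) (hz : ‖z‖ = 1) :
    Tgen g k (Cmid g k * z) * Tgen g k (Cmid g k / z) = 1 / (Cmid g k) ^ 2 :=
  Tgen_central_symmetry_general g k z hz
end

section
/- Let g ≥ 2, α = 2π/(8g−4), and T_k(z) = (−1)^{k+1} (e^{i(1−k)α} z + i√(cos α)) / ((−i√(cos α)) z + e^{i(k−1)α}). Then for all z on the unit circle, T_k(1/z) = 1 / T_{4g−k}(z). -/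
open Complex Real

/-! `Tgen g k` is a Möbius map `z ↦ s (a z + b) / (-b z + d)` with `s = ±1`. For such a map,
substituting `1 / z` and clearing `z` gives `s (a + b z) / (d z - b)`, the reciprocal of the
map with `(a, d)` replaced by `(-d, -a)`. Since `(4g - 2) α = π`, passing from `k` to `4g - k`
multiplies both exponentials by `-1` and swaps them, and leaves the sign `(-1)^(k+1)` unchanged. -/

def mobiusSkew {K : Type*} [Field K] (s a b d z : K) : K :=
  s * ((a * z + b) / (-b * z + d))

theorem mobiusSkew_one_div {K : Type*} [Field K] {s : K} (hs : s * s = 1) (a b d : K)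
    {z : K} (hz : z ≠ 0) :
    mobiusSkew s a b d (1 / z) = 1 / mobiusSkew s (-d) b (-a) z := by
  have hs' : s⁻¹ = s := inv_eq_of_mul_eq_one_right hs
  have hnum : a * (1 / z) + b = (a + b * z) / z := by field_simp
  have hden : -b * (1 / z) + d = (d * z - b) / z := by field_simp; ring
  rw [mobiusSkew, mobiusSkew, hnum, hden, div_div_div_cancel_right₀ hz, one_div, mul_inv,
    hs', inv_div, ← neg_div_neg_eq]
  ring_nf

theorem neg_one_zpow_mul_self {α : Type*} [DivisionMonoid α] [HasDistribNeg α] (n : ℤ) :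
    (-1 : α) ^ n * (-1) ^ n = 1 := by
  rw [neg_one_zpow_eq_ite]
  split_ifs <;> simp

theorem neg_one_zpow_eq_of_even_sub {α : Type*} [DivisionMonoid α] [HasDistribNeg α] {m n : ℤ}
    (h : Even (m - n)) : (-1 : α) ^ m = (-1) ^ n := by
  simp only [neg_one_zpow_eq_ite, Int.even_sub.mp h]

theorem four_mul_sub_two_mul_alphaG (g : ℕ) : (4 * (g : ℝ) - 2) * alphaG g = π := by
  have h : 8 * (g : ℝ) - 4 ≠ 0 := by
    intro h
    have : (g : ℝ) * 2 = 1 := by linarith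
    norm_cast at this
    omega
  rw [alphaG, mul_div_assoc', div_eq_iff h]
  ring

theorem Tgen_eq_mobiusSkew (g : ℕ) (k : ℤ) (z : ℂ) :
    Tgen g k z = mobiusSkew ((-1) ^ (k + 1)) (exp (I * (1 - k) * alphaG g))
      (I * Real.sqrt (Real.cos (alphaG g))) (exp (I * (k - 1) * alphaG g)) z := by
  rw [Tgen, mobiusSkew, neg_mul]

theorem exp_I_mul_alphaG_eq_neg (g : ℕ) {v w : ℂ} (h : w = v + (4 * g - 2)) :
    exp (I * w * alphaG g) = -exp (I * v * alphaG g) := by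
  have hπ : ((4 * (g : ℝ) - 2) * alphaG g : ℝ) = (π : ℂ) := by
    rw [four_mul_sub_two_mul_alphaG]
  rw [← exp_add_pi_mul_I, ← hπ, h]
  push_cast
  ring_nf

theorem Tgen_oddness_general (g : ℕ) (k : ℤ) (z : ℂ) (hz : ‖z‖ = 1) :
    Tgen g k (1 / z) = 1 / Tgen g (4 * (g : ℤ) - k) z := by
  have hz0 : z ≠ 0 := norm_ne_zero_iff.mp (hz ▸ one_ne_zero)
  have hsign : (-1 : ℂ) ^ (4 * (g : ℤ) - k + 1) = (-1) ^ (k + 1) :=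
    neg_one_zpow_eq_of_even_sub ⟨2 * g - k, by ring⟩
  have hexp₁ : exp (I * (1 - ((4 * g - k : ℤ) : ℂ)) * alphaG g) =
      -exp (I * (k - 1) * alphaG g) := by
    rw [exp_I_mul_alphaG_eq_neg g (v := 1 - ((4 * g - k : ℤ) : ℂ)) (w := k - 1)
      (by push_cast; ring), neg_neg]
  have hexp₂ : exp (I * (((4 * g - k : ℤ) : ℂ) - 1) * alphaG g) =
      -exp (I * (1 - k) * alphaG g) :=
    exp_I_mul_alphaG_eq_neg g (by push_cast; ring)
  rw [Tgen_eq_mobiusSkew, Tgen_eq_mobiusSkew,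
    mobiusSkew_one_div (neg_one_zpow_mul_self _) _ _ _ hz0, hsign, hexp₁, hexp₂]

theorem Tgen_oddness (g : ℕ) (hg : 2 ≤ g) (k : ℤ) (z : ℂ) (hz : ‖z‖ = 1) :
    Tgen g k (1 / z) = 1 / Tgen g (4 * (g : ℤ) - k) z :=
  Tgen_oddness_general g k z hz
end

section
/- Let g ≥ 2, n = 16g−8, and let M be an n×n matrix with entries in {0,1} such that: for every odd row index i, the row sum over odd-index columns equals 1 and the row sum over even-index columns equals 1; and for every even row index i, the row sum over odd-index columns equals 8g−8 and the row sum over even-index columns equals 8g−7. Then the vector v with v_i = λ − 8g + 7 for odd i and v_i = 8g−8 for even i, where λ = 4g−3 + √((4g−3)²−1), satisfies M·v = λ·v. -/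
/-!
Row `i` of `M *ᵥ v` only sees the two column-parity sums of row `i`, so the eigen-equation is
a ring identity on even rows and, on odd rows, the relation `λ (λ - 8g + 7) = λ - 1`, which says
that `λ = c + √(c² - 1)`, `c = 4g - 3`, is a root of `X² - 2cX + 1`.
-/

open Finset

theorem Matrix.mulVec_ite_apply {m n R : Type*} [Fintype n] [NonUnitalNonAssocSemiring R]
    (M : Matrix m n R) (p : n → Prop) [DecidablePred p] (a b : R) (i : m) :
    M.mulVec (fun j => if p j then a else b) i =
      (∑ j ∈ univ.filter p, M i j) * a + (∑ j ∈ univ.filter (fun j => ¬ p j), M i j) * b := by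
  simp only [Matrix.mulVec, dotProduct, mul_ite, Finset.sum_ite, Finset.sum_mul]

theorem Real.add_sqrt_sq_sub_one_quadratic_eq_zero (c : ℝ) (hc : 1 ≤ c ^ 2) :
    (c + √(c ^ 2 - 1)) ^ 2 - 2 * c * (c + √(c ^ 2 - 1)) + 1 = 0 := by
  have hs : √(c ^ 2 - 1) ^ 2 = c ^ 2 - 1 := Real.sq_sqrt (by linarith)
  linear_combination hs

theorem eigenvector_of_rowsum_matrix_general (g : ℕ)
    (M : Matrix (Fin (16 * g - 8)) (Fin (16 * g - 8)) ℝ)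
    (hodd : ∀ i : Fin (16 * g - 8), Odd ((i : ℕ) + 1) →
      (∑ j ∈ univ.filter (fun j : Fin (16 * g - 8) => Odd ((j : ℕ) + 1)), M i j) = 1 ∧
      (∑ j ∈ univ.filter (fun j : Fin (16 * g - 8) => Even ((j : ℕ) + 1)), M i j) = 1)
    (heven : ∀ i : Fin (16 * g - 8), Even ((i : ℕ) + 1) →
      (∑ j ∈ univ.filter (fun j : Fin (16 * g - 8) => Odd ((j : ℕ) + 1)), M i j) = 8 * (g : ℝ) - 8 ∧
      (∑ j ∈ univ.filter (fun j : Fin (16 * g - 8) => Even ((j : ℕ) + 1)), M i j) = 8 * (g : ℝ) - 7) :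
    M.mulVec (fun i : Fin (16 * g - 8) => if Odd ((i : ℕ) + 1)
        then (4 * (g : ℝ) - 3 + Real.sqrt ((4 * (g : ℝ) - 3) ^ 2 - 1)) - 8 * (g : ℝ) + 7
        else 8 * (g : ℝ) - 8)
      = (4 * (g : ℝ) - 3 + Real.sqrt ((4 * (g : ℝ) - 3) ^ 2 - 1)) •
        (fun i : Fin (16 * g - 8) => if Odd ((i : ℕ) + 1)
        then (4 * (g : ℝ) - 3 + Real.sqrt ((4 * (g : ℝ) - 3) ^ 2 - 1)) - 8 * (g : ℝ) + 7
        else 8 * (g : ℝ) - 8) := by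
  have hc : 1 ≤ (4 * (g : ℝ) - 3) ^ 2 := by
    rcases Nat.eq_zero_or_pos g with rfl | hpos
    · norm_num
    · have hg1 : (1 : ℝ) ≤ g := by exact_mod_cast hpos
      nlinarith
  have hquad := Real.add_sqrt_sq_sub_one_quadratic_eq_zero _ hc
  funext i
  simp only [Matrix.mulVec_ite_apply, Nat.not_odd_iff_even, Pi.smul_apply, smul_eq_mul]
  by_cases hi : Odd ((i : ℕ) + 1)
  · obtain ⟨h_odd_cols, h_even_cols⟩ := hodd i hi
    rw [h_odd_cols, h_even_cols, if_pos hi]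
    linear_combination -hquad
  · obtain ⟨h_odd_cols, h_even_cols⟩ := heven i (Nat.not_odd_iff_even.mp hi)
    rw [h_odd_cols, h_even_cols, if_neg hi]
    ring

theorem eigenvector_of_rowsum_matrix (g : ℕ) (hg : 2 ≤ g)
    (M : Matrix (Fin (16 * g - 8)) (Fin (16 * g - 8)) ℝ)
    (h01 : ∀ i j, M i j = 0 ∨ M i j = 1)
    (hodd : ∀ i : Fin (16 * g - 8), Odd ((i : ℕ) + 1) →
      (∑ j ∈ univ.filter (fun j : Fin (16 * g - 8) => Odd ((j : ℕ) + 1)), M i j) = 1 ∧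
      (∑ j ∈ univ.filter (fun j : Fin (16 * g - 8) => Even ((j : ℕ) + 1)), M i j) = 1)
    (heven : ∀ i : Fin (16 * g - 8), Even ((i : ℕ) + 1) →
      (∑ j ∈ univ.filter (fun j : Fin (16 * g - 8) => Odd ((j : ℕ) + 1)), M i j) = 8 * (g : ℝ) - 8 ∧
      (∑ j ∈ univ.filter (fun j : Fin (16 * g - 8) => Even ((j : ℕ) + 1)), M i j) = 8 * (g : ℝ) - 7) :
    M.mulVec (fun i : Fin (16 * g - 8) => if Odd ((i : ℕ) + 1)
        then (4 * (g : ℝ) - 3 + Real.sqrt ((4 * (g : ℝ) - 3) ^ 2 - 1)) - 8 * (g : ℝ) + 7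
        else 8 * (g : ℝ) - 8)
      = (4 * (g : ℝ) - 3 + Real.sqrt ((4 * (g : ℝ) - 3) ^ 2 - 1)) •
        (fun i : Fin (16 * g - 8) => if Odd ((i : ℕ) + 1)
        then (4 * (g : ℝ) - 3 + Real.sqrt ((4 * (g : ℝ) - 3) ^ 2 - 1)) - 8 * (g : ℝ) + 7
        else 8 * (g : ℝ) - 8) :=
  eigenvector_of_rowsum_matrix_general g M hodd heven
end
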